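/- arXiv:1305.2786 — 3 statements merged into one kernel-verified Lean document; each statement's English description precedes it below -/
import Mathlib

section
/- For λ > 0, the function G(a₁,x₁) = a₁(λ+a₁²)^{1/4}(2x₁²-1) + (1/2)∫₀^{a₁} (x²+2λ)/(λ+x²)^{3/4} dx on ℝ × (0,1] satisfies ∂G/∂x₁ = 4a₁(λ+a₁²)^{1/4}x₁ and ∂G/∂a₁ = (1/2)(λ+a₁²)^{-3/4}((2x₁²-1)(3a₁²+2λ) + a₁² + 2λ). In particular, along any level set G = C with a₁, x₁ differentiable functions of t, the equation 4a₁x₁ẋ₁ + (λ+a₁²)^{-1}(-a₁² + (2λ+3a₁²)x₁²)ȧ₁ = 0 holds. -/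
open Real

/-- The function `G(a₁, x₁) = a₁(λ+a₁²)^{1/4}(2x₁²-1) + (1/2)∫₀^{a₁} (x²+2λ)/(λ+x²)^{3/4} dx`. -/
noncomputable def G (lam a x : ℝ) : ℝ :=
  a * (lam + a ^ 2) ^ ((1 : ℝ) / 4) * (2 * x ^ 2 - 1) +
    (1 / 2) * ∫ t in (0 : ℝ)..a, (t ^ 2 + 2 * lam) / (lam + t ^ 2) ^ ((3 : ℝ) / 4)

lemma auxA (lam : ℝ) (hlam : 0 < lam) (a : ℝ) :
    HasDerivAt (fun y : ℝ => y * (lam + y ^ 2) ^ ((1 : ℝ) / 4))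
      ((lam + a ^ 2) * (lam + a ^ 2) ^ (-(3 : ℝ) / 4)
        + (1 / 2) * a ^ 2 * (lam + a ^ 2) ^ (-(3 : ℝ) / 4)) a := by
  have hp : 0 < lam + a ^ 2 := by positivity
  have h1 : HasDerivAt (fun y : ℝ => lam + y ^ 2) (2 * a ^ 1) a :=
    (hasDerivAt_pow 2 a).const_add lam
  have h2 := h1.rpow_const (p := (1 : ℝ) / 4) (Or.inl hp.ne')
  have h3 := (hasDerivAt_id a).mul h2
  simp only [id_eq] at h3
  refine h3.congr_deriv ?_
  have he : ((1 : ℝ) / 4 - 1) = -(3 : ℝ) / 4 := by norm_num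
  rw [he]
  have hq : (lam + a ^ 2) ^ ((1 : ℝ) / 4)
      = (lam + a ^ 2) * (lam + a ^ 2) ^ (-(3 : ℝ) / 4) := by
    rw [← Real.rpow_one_add' hp.le (by norm_num : (1 : ℝ) + -3/4 ≠ 0)]
    norm_num
  rw [hq]; ring

lemma auxB (lam : ℝ) (hlam : 0 < lam) (a : ℝ) :
    HasDerivAt (fun y : ℝ => (1 / 2 : ℝ) * ∫ t in (0 : ℝ)..y,
        (t ^ 2 + 2 * lam) / (lam + t ^ 2) ^ ((3 : ℝ) / 4))
      ((1 / 2) * (a ^ 2 + 2 * lam) * (lam + a ^ 2) ^ (-(3 : ℝ) / 4)) a := by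
  have hp : 0 < lam + a ^ 2 := by positivity
  have hcont : Continuous fun t : ℝ => (t ^ 2 + 2 * lam) / (lam + t ^ 2) ^ ((3 : ℝ) / 4) := by
    apply Continuous.div (by continuity)
    · exact (by continuity : Continuous fun t : ℝ => lam + t ^ 2).rpow_const
        (fun t => Or.inr (by norm_num))
    · intro t
      exact (Real.rpow_pos_of_pos (by positivity) _).ne'
  have h := ((hcont.integral_hasStrictDerivAt 0 a).hasDerivAt).const_mul (1 / 2 : ℝ)
  refine h.congr_deriv ?_
  have hq : (lam + a ^ 2) ^ (-(3 : ℝ) / 4) = ((lam + a ^ 2) ^ ((3 : ℝ) / 4))⁻¹ := by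
    rw [← Real.rpow_neg hp.le]
    norm_num
  rw [hq]; ring

/-- The partial derivatives of `G` on `ℝ × (0,1]`, and the resulting ODE along level sets. -/
theorem G_partial_derivatives (lam : ℝ) (hlam : 0 < lam) :
    -- ∂G/∂x₁ = 4a₁(λ+a₁²)^{1/4}x₁
    (∀ a x : ℝ, 0 < x → x ≤ 1 →
      HasDerivAt (fun x' => G lam a x') (4 * a * (lam + a ^ 2) ^ ((1 : ℝ) / 4) * x) x) ∧
    -- ∂G/∂a₁ = (1/2)(λ+a₁²)^{-3/4}((2x₁²-1)(3a₁²+2λ) + a₁² + 2λ)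
    (∀ a x : ℝ, 0 < x → x ≤ 1 →
      HasDerivAt (fun a' => G lam a' x)
        ((1 / 2) * (lam + a ^ 2) ^ (-(3 : ℝ) / 4) *
          ((2 * x ^ 2 - 1) * (3 * a ^ 2 + 2 * lam) + a ^ 2 + 2 * lam)) a) ∧
    -- along a level set G = C, the ODE 4a₁x₁ẋ₁ + (λ+a₁²)⁻¹(-a₁² + (2λ+3a₁²)x₁²)ȧ₁ = 0 holds
    (∀ (C : ℝ) (a x a' x' : ℝ → ℝ) (t : ℝ),
      (∀ s : ℝ, 0 < x s ∧ x s ≤ 1) →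
      HasDerivAt a (a' t) t → HasDerivAt x (x' t) t →
      (∀ s : ℝ, G lam (a s) (x s) = C) →
      4 * a t * x t * x' t +
        (lam + (a t) ^ 2)⁻¹ * (-(a t) ^ 2 + (2 * lam + 3 * (a t) ^ 2) * (x t) ^ 2) * a' t
          = 0) := by
  refine ⟨?_, ?_, ?_⟩
  · intro a x _ _
    have h : HasDerivAt (fun x' : ℝ => 2 * x' ^ 2 - 1) (2 * (2 * x ^ 1)) x :=
      ((hasDerivAt_pow 2 x).const_mul 2).sub_const 1
    have h2 := (h.const_mul (a * (lam + a ^ 2) ^ ((1 : ℝ) / 4))).add_const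
      ((1 / 2) * ∫ t in (0 : ℝ)..a, (t ^ 2 + 2 * lam) / (lam + t ^ 2) ^ ((3 : ℝ) / 4))
    refine h2.congr_deriv ?_
    ring
  · intro a x _ _
    have hA := (auxA lam hlam a).mul_const (2 * x ^ 2 - 1)
    have h := hA.add (auxB lam hlam a)
    refine h.congr_deriv ?_
    ring
  · intro C a x a' x' t hx01 ha hx hC
    have hp : 0 < lam + (a t) ^ 2 := by positivity
    have hq : 0 < (lam + (a t) ^ 2) ^ (-(3 : ℝ) / 4) := Real.rpow_pos_of_pos hp _
    set q := (lam + (a t) ^ 2) ^ (-(3 : ℝ) / 4) with hqdef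
    -- derivative of the composite
    have hA := (auxA lam hlam (a t)).comp t ha
    have hB := (auxB lam hlam (a t)).comp t ha
    have hW : HasDerivAt (fun s : ℝ => 2 * (x s) ^ 2 - 1) (2 * (2 * x t ^ 1 * x' t)) t :=
      (((hx.pow 2).const_mul 2).sub_const 1)
    have hH := (hA.mul hW).add hB
    have hH0 : HasDerivAt (fun s : ℝ => (fun s => a s * (lam + (a s) ^ 2) ^ ((1 : ℝ) / 4)) s *
        (fun s => 2 * (x s) ^ 2 - 1) s + (fun s => (1 / 2 : ℝ) * ∫ u in (0 : ℝ)..(a s),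
        (u ^ 2 + 2 * lam) / (lam + u ^ 2) ^ ((3 : ℝ) / 4)) s) 0 t := by
      have : (fun s : ℝ => (fun s => a s * (lam + (a s) ^ 2) ^ ((1 : ℝ) / 4)) s *
          (fun s => 2 * (x s) ^ 2 - 1) s + (fun s => (1 / 2 : ℝ) * ∫ u in (0 : ℝ)..(a s),
          (u ^ 2 + 2 * lam) / (lam + u ^ 2) ^ ((3 : ℝ) / 4)) s) = fun _ => C := by
        funext s
        exact hC s
      rw [this]
      exact hasDerivAt_const t C
    have heq := hH.unique hH0
    -- extract the polynomial identity
    have hquar : (lam + (a t) ^ 2) ^ ((1 : ℝ) / 4) = (lam + (a t) ^ 2) * q := by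
      rw [hqdef, ← Real.rpow_one_add' hp.le (by norm_num : (1 : ℝ) + -3/4 ≠ 0)]
      norm_num
    simp only [Function.comp_apply] at heq
    rw [hquar] at heq
    have key : q * ((lam + (a t) ^ 2) * (4 * a t * x t * x' t) +
        (-(a t) ^ 2 + (2 * lam + 3 * (a t) ^ 2) * (x t) ^ 2) * a' t) = 0 := by
      linear_combination heq
    have key2 : (lam + (a t) ^ 2) * (4 * a t * x t * x' t) +
        (-(a t) ^ 2 + (2 * lam + 3 * (a t) ^ 2) * (x t) ^ 2) * a' t = 0 :=
      (mul_eq_zero.mp key).resolve_left hq.ne'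
    field_simp
    linear_combination key2
end

section
/- For λ > 0 and any fixed a₁ > 0, the function x₁ ↦ G(a₁,x₁) is strictly increasing on (0,1]; for fixed a₁ < 0 it is strictly decreasing on (0,1]; the function a₁ ↦ G(a₁,1) is strictly increasing on ℝ; the function a₁ ↦ lim_{x₁→0} G(a₁,x₁) is strictly decreasing on ℝ; and G(0,x₁) = 0 for all x₁ ∈ (0,1]. Moreover G(a₁,1) → ±∞ as a₁ → ±∞ and lim_{x₁→0}G(a₁,x₁) → ∓∞ as a₁ → ±∞. -/
open Real Filter

lemma G_cont_integrand (lam : ℝ) (hlam : 0 < lam) :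
    Continuous (fun t : ℝ => (t ^ 2 + 2 * lam) / (lam + t ^ 2) ^ ((3 : ℝ) / 4)) := by
  apply Continuous.div (by continuity)
  · exact (continuous_const.add (continuous_pow 2)).rpow_const
      fun t => Or.inl (ne_of_gt (by show (0:ℝ) < lam + t ^ 2; nlinarith [sq_nonneg t]))
  · intro t
    exact ne_of_gt (Real.rpow_pos_of_pos (by nlinarith [sq_nonneg t]) _)

lemma hasDerivAt_G (lam : ℝ) (hlam : 0 < lam) (x a : ℝ) :
    HasDerivAt (fun a => G lam a x)
      (((2 * x ^ 2 - 1) * (lam + 3 / 2 * a ^ 2) + (a ^ 2 / 2 + lam)) /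
        (lam + a ^ 2) ^ ((3 : ℝ) / 4)) a := by
  have hu : 0 < lam + a ^ 2 := by nlinarith [sq_nonneg a]
  have h1 : HasDerivAt (fun a : ℝ => lam + a ^ 2) (2 * a) a := by
    simpa using (hasDerivAt_pow 2 a).const_add lam
  have h2 := h1.rpow_const (p := (1 : ℝ)/4) (Or.inl hu.ne')
  have h3 := ((hasDerivAt_id a).mul h2).mul_const (2 * x ^ 2 - 1)
  have h5 := (((G_cont_integrand lam hlam).integral_hasStrictDerivAt 0 a).hasDerivAt).const_mul
    ((1 : ℝ)/2)
  have key := h3.add h5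
  refine key.congr_deriv ?_
  have hne : (lam + a ^ 2) ^ ((3 : ℝ)/4) ≠ 0 := ne_of_gt (Real.rpow_pos_of_pos hu _)
  have e3 : (lam + a ^ 2) ^ ((1 : ℝ)/4) = (lam + a ^ 2) / (lam + a ^ 2) ^ ((3 : ℝ)/4) := by
    rw [show (1 : ℝ)/4 = 1 - 3/4 by norm_num, Real.rpow_sub hu, Real.rpow_one]
  have e4 : (lam + a ^ 2) ^ ((1 : ℝ)/4 - 1) = ((lam + a ^ 2) ^ ((3 : ℝ)/4))⁻¹ := by
    rw [show (1 : ℝ)/4 - 1 = -(3/4) by norm_num, Real.rpow_neg hu.le]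
  rw [e3, e4, id_eq]
  field_simp
  ring

lemma G_neg (lam a x : ℝ) : G lam (-a) x = -G lam a x := by
  have hint : (∫ t in (0 : ℝ)..(-a), (t ^ 2 + 2 * lam) / (lam + t ^ 2) ^ ((3 : ℝ) / 4))
      = -∫ t in (0 : ℝ)..a, (t ^ 2 + 2 * lam) / (lam + t ^ 2) ^ ((3 : ℝ) / 4) := by
    have h := intervalIntegral.integral_comp_neg (a := a) (b := 0)
      (fun t : ℝ => (t ^ 2 + 2 * lam) / (lam + t ^ 2) ^ ((3 : ℝ) / 4))
    simp only [neg_zero, neg_sq] at h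
    rw [← h, intervalIntegral.integral_symm]
  unfold G
  rw [hint]
  simp only [neg_sq]
  ring

lemma G1_top (lam : ℝ) (hlam : 0 < lam) : Tendsto (fun a => G lam a 1) atTop atTop := by
  set c : ℝ := 2 * lam ^ ((1 : ℝ)/4) with hc_def
  have hc : 0 < c := by positivity
  have hD : ∀ a : ℝ, HasDerivAt (fun a => G lam a 1 - c * a)
      (((2 * 1 ^ 2 - 1) * (lam + 3 / 2 * a ^ 2) + (a ^ 2 / 2 + lam)) /
        (lam + a ^ 2) ^ ((3 : ℝ) / 4) - c * 1) a :=
    fun a => (hasDerivAt_G lam hlam 1 a).sub ((hasDerivAt_id a).const_mul c)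
  have hmono : Monotone fun a => G lam a 1 - c * a := by
    apply monotone_of_deriv_nonneg (fun a => (hD a).differentiableAt)
    intro a
    rw [(hD a).deriv]
    have hu : 0 < lam + a ^ 2 := by nlinarith [sq_nonneg a]
    have heq : ((2 * 1 ^ 2 - 1) * (lam + 3 / 2 * a ^ 2) + (a ^ 2 / 2 + lam)) /
        (lam + a ^ 2) ^ ((3 : ℝ) / 4) = 2 * (lam + a ^ 2) ^ ((1 : ℝ)/4) := by
      rw [show (1 : ℝ)/4 = 1 - 3/4 by norm_num, Real.rpow_sub hu, Real.rpow_one]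
      field_simp
      ring
    rw [heq]
    have : lam ^ ((1 : ℝ)/4) ≤ (lam + a ^ 2) ^ ((1 : ℝ)/4) :=
      Real.rpow_le_rpow hlam.le (by nlinarith [sq_nonneg a]) (by norm_num)
    simp only [mul_one]
    linarith
  have hlin : Tendsto (fun a : ℝ => G lam 0 1 + c * a) atTop atTop :=
    tendsto_atTop_add_const_left _ _ (tendsto_id.const_mul_atTop hc)
  apply tendsto_atTop_mono' atTop _ hlin
  filter_upwards [eventually_ge_atTop (0 : ℝ)] with a ha
  have := hmono ha
  simp only [mul_zero, sub_zero] at this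
  linarith

lemma G1_bot (lam : ℝ) (hlam : 0 < lam) : Tendsto (fun a => G lam a 1) atBot atBot := by
  have : (fun a => G lam a 1) = fun a => -G lam (-a) 1 := by
    funext a
    rw [G_neg, neg_neg]
  rw [this]
  exact tendsto_neg_atTop_atBot.comp ((G1_top lam hlam).comp tendsto_neg_atBot_atTop)

lemma G0_bot (lam : ℝ) (hlam : 0 < lam) : Tendsto (fun a => G lam a 0) atTop atBot := by
  set c : ℝ := ((lam + 1) ^ ((3 : ℝ)/4))⁻¹ with hc_def
  have hp : 0 < (lam + 1) ^ ((3 : ℝ)/4) := Real.rpow_pos_of_pos (by linarith) _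
  have hc : 0 < c := inv_pos.mpr hp
  have hD : ∀ a : ℝ, HasDerivAt (fun a => G lam a 0 + c * a)
      (((2 * 0 ^ 2 - 1) * (lam + 3 / 2 * a ^ 2) + (a ^ 2 / 2 + lam)) /
        (lam + a ^ 2) ^ ((3 : ℝ) / 4) + c * 1) a :=
    fun a => (hasDerivAt_G lam hlam 0 a).add ((hasDerivAt_id a).const_mul c)
  have hanti : AntitoneOn (fun a => G lam a 0 + c * a) (Set.Ici 1) := by
    apply antitoneOn_of_deriv_nonpos (convex_Ici 1)
      (Continuous.continuousOn (by
        exact Differentiable.continuous fun a => (hD a).differentiableAt))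
      (fun a _ => (hD a).differentiableAt.differentiableWithinAt)
    intro a ha
    rw [interior_Ici] at ha
    have ha1 : (1 : ℝ) < a := ha
    rw [(hD a).deriv]
    have hu : 0 < lam + a ^ 2 := by nlinarith [sq_nonneg a]
    have hu34 : 0 < (lam + a ^ 2) ^ ((3 : ℝ)/4) := Real.rpow_pos_of_pos hu _
    have hN : (2 * 0 ^ 2 - 1) * (lam + 3 / 2 * a ^ 2) + (a ^ 2 / 2 + lam) = -a ^ 2 := by ring
    rw [hN]
    have hbound : c ≤ a ^ 2 / (lam + a ^ 2) ^ ((3 : ℝ)/4) := by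
      rw [le_div_iff₀ hu34]
      have h1 : lam + a ^ 2 ≤ (lam + 1) * a ^ 2 := by
        nlinarith [mul_pos hlam (show (0:ℝ) < a ^ 2 - 1 by nlinarith)]
      have h2 : (lam + a ^ 2) ^ ((3 : ℝ)/4) ≤ ((lam + 1) * a ^ 2) ^ ((3 : ℝ)/4) :=
        Real.rpow_le_rpow hu.le h1 (by norm_num)
      have h3 : ((lam + 1) * a ^ 2) ^ ((3 : ℝ)/4)
          = (lam + 1) ^ ((3 : ℝ)/4) * (a ^ 2) ^ ((3 : ℝ)/4) :=
        Real.mul_rpow (by linarith) (sq_nonneg a)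
      have h4 : (a ^ 2) ^ ((3 : ℝ)/4) ≤ a ^ 2 := by
        calc (a ^ 2) ^ ((3 : ℝ)/4) ≤ (a ^ 2) ^ (1 : ℝ) :=
              Real.rpow_le_rpow_of_exponent_le (by nlinarith) (by norm_num)
        _ = a ^ 2 := Real.rpow_one _
      calc c * (lam + a ^ 2) ^ ((3 : ℝ)/4)
          ≤ c * ((lam + 1) ^ ((3 : ℝ)/4) * (a ^ 2)) := by
            apply mul_le_mul_of_nonneg_left _ hc.le
            calc (lam + a ^ 2) ^ ((3 : ℝ)/4) ≤ (lam + 1) ^ ((3 : ℝ)/4) * (a ^ 2) ^ ((3 : ℝ)/4) :=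
                  h3 ▸ h2
            _ ≤ (lam + 1) ^ ((3 : ℝ)/4) * a ^ 2 := by
                  exact mul_le_mul_of_nonneg_left h4 hp.le
        _ = a ^ 2 := by
            rw [hc_def, ← mul_assoc, inv_mul_cancel₀ hp.ne', one_mul]
    rw [neg_div, mul_one]
    linarith
  have hlin : Tendsto (fun a : ℝ => (G lam 1 0 + c) + -(c * a)) atTop atBot :=
    tendsto_atBot_add_const_left _ _
      (tendsto_neg_atTop_atBot.comp (tendsto_id.const_mul_atTop hc))
  apply tendsto_atBot_mono' atTop _ hlin
  filter_upwards [eventually_ge_atTop (1 : ℝ)] with a ha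
  have := hanti (Set.self_mem_Ici) (Set.mem_Ici.mpr ha) ha
  simp only [mul_one] at this
  linarith

lemma G0_top (lam : ℝ) (hlam : 0 < lam) : Tendsto (fun a => G lam a 0) atBot atTop := by
  have : (fun a => G lam a 0) = fun a => -G lam (-a) 0 := by
    funext a
    rw [G_neg, neg_neg]
  rw [this]
  exact tendsto_neg_atBot_atTop.comp ((G0_bot lam hlam).comp tendsto_neg_atBot_atTop)

/-- Monotonicity and asymptotic properties of `G`. -/
theorem G_monotonicity (lam : ℝ) (hlam : 0 < lam) :
    -- for fixed a₁ > 0, x₁ ↦ G(a₁,x₁) is strictly increasing on (0,1]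
    (∀ a : ℝ, 0 < a → StrictMonoOn (fun x => G lam a x) (Set.Ioc 0 1)) ∧
    -- for fixed a₁ < 0, x₁ ↦ G(a₁,x₁) is strictly decreasing on (0,1]
    (∀ a : ℝ, a < 0 → StrictAntiOn (fun x => G lam a x) (Set.Ioc 0 1)) ∧
    -- a₁ ↦ G(a₁,1) is strictly increasing
    StrictMono (fun a => G lam a 1) ∧
    -- a₁ ↦ lim_{x₁→0} G(a₁,x₁) is strictly decreasing
    StrictAnti (fun a => G lam a 0) ∧
    -- G(0, x₁) = 0
    (∀ x : ℝ, G lam 0 x = 0) ∧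
    -- G(a₁,1) → ±∞ as a₁ → ±∞
    Tendsto (fun a => G lam a 1) atTop atTop ∧
    Tendsto (fun a => G lam a 1) atBot atBot ∧
    -- lim_{x₁→0} G(a₁,x₁) → ∓∞ as a₁ → ±∞
    Tendsto (fun a => G lam a 0) atTop atBot ∧
    Tendsto (fun a => G lam a 0) atBot atTop := by
  refine ⟨?_, ?_, ?_, ?_, ?_, G1_top lam hlam, G1_bot lam hlam, G0_bot lam hlam,
    G0_top lam hlam⟩
  · intro a ha x hx y hy hxy
    have hC : 0 < a * (lam + a ^ 2) ^ ((1 : ℝ)/4) :=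
      mul_pos ha (Real.rpow_pos_of_pos (by nlinarith [sq_nonneg a]) _)
    have hlt : 2 * x ^ 2 - 1 < 2 * y ^ 2 - 1 := by nlinarith [hx.1]
    have := mul_lt_mul_of_pos_left hlt hC
    simp only [G]
    linarith
  · intro a ha x hx y hy hxy
    have hC : a * (lam + a ^ 2) ^ ((1 : ℝ)/4) < 0 :=
      mul_neg_of_neg_of_pos ha (Real.rpow_pos_of_pos (by nlinarith [sq_nonneg a]) _)
    have hlt : 2 * x ^ 2 - 1 < 2 * y ^ 2 - 1 := by nlinarith [hx.1]
    have := mul_lt_mul_of_neg_left hlt hC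
    simp only [G]
    linarith
  · apply strictMono_of_deriv_pos
    intro a
    rw [(hasDerivAt_G lam hlam 1 a).deriv]
    exact div_pos (by nlinarith [sq_nonneg a])
      (Real.rpow_pos_of_pos (by nlinarith [sq_nonneg a]) _)
  · have hcont : Continuous fun a => G lam a 0 :=
      (Differentiable.continuous fun a => (hasDerivAt_G lam hlam 0 a).differentiableAt)
    have hneg : ∀ a : ℝ, a ≠ 0 → deriv (fun a => G lam a 0) a < 0 := by
      intro a ha
      rw [(hasDerivAt_G lam hlam 0 a).deriv]
      apply div_neg_of_neg_of_pos
      · nlinarith [pow_two_pos_of_ne_zero ha]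
      · exact Real.rpow_pos_of_pos (by nlinarith [sq_nonneg a]) _
    apply StrictAntiOn.Iic_union_Ici (a := (0 : ℝ))
    · apply strictAntiOn_of_deriv_neg (convex_Iic 0) hcont.continuousOn
      intro a ha
      rw [interior_Iic] at ha
      exact hneg a (ne_of_lt ha)
    · apply strictAntiOn_of_deriv_neg (convex_Ici 0) hcont.continuousOn
      intro a ha
      rw [interior_Ici] at ha
      exact hneg a (ne_of_gt ha)
  · intro x; simp [G]
end

section
/- Let λ > 0, E ∈ ℝ, and consider real-valued differentiable functions x₁,x₄,x₅,a₁,a₂ on an interval with x₁²+x₄²+x₅²=1, x₁ > 0, x₅ < 1, and r² = a₁²+a₂². Suppose the three ODEs hold: (i) 4(2x₁ẋ₁a₁ + ȧ₁x₁²) - (1-x₁²)a₁ d/dt log(λ+r²) = 0, (ii) 4x₁ẋ₁ - d/dt log(λ+r²) + (x₁²/(1-x₅))(4ẋ₅ + d/dt log(λ+r²)) = 0, (iii) 4ẋ₄ + (x₄/(1-x₅))(4ẋ₅ + d/dt log(λ+r²)) = 0. Then the quantities x₄⁴(λ+r²), x₅⁴(λ+r²), and a₁x₁ are each constant in t. 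-/
lemma const_on_Ioo {A B : ℝ} {f f' : ℝ → ℝ}
    (hf : ∀ t ∈ Set.Ioo A B, HasDerivAt f (f' t) t)
    (h0 : ∀ t ∈ Set.Ioo A B, f' t = 0) :
    ∀ t ∈ Set.Ioo A B, ∀ t' ∈ Set.Ioo A B, f t = f t' := by
  have key : ∀ s u, s ∈ Set.Ioo A B → u ∈ Set.Ioo A B → s < u → f s = f u := by
    intro s u hs hu hsu
    have hsub : Set.Icc s u ⊆ Set.Ioo A B := fun x hx =>
      ⟨lt_of_lt_of_le hs.1 hx.1, lt_of_le_of_lt hx.2 hu.2⟩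
    have hsub2 : Set.Ioo s u ⊆ Set.Ioo A B := fun x hx =>
      hsub ⟨le_of_lt hx.1, le_of_lt hx.2⟩
    have hc : ContinuousOn f (Set.Icc s u) := fun x hx =>
      ((hf x (hsub hx)).continuousAt).continuousWithinAt
    obtain ⟨c, hc', hceq⟩ := exists_hasDerivAt_eq_slope f f' hsu hc
      (fun x hx => hf x (hsub2 hx))
    rw [h0 c (hsub2 hc')] at hceq
    have hne : u - s ≠ 0 := by linarith
    have := hceq.symm
    rw [div_eq_iff hne] at this
    linarith
  intro t ht t' ht'
  rcases lt_trichotomy t t' with h | h | h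
  · exact key t t' ht ht' h
  · rw [h]
  · exact (key t' t ht' ht h).symm


/-- Along solutions of the cohomogeneity-one ODE system for the SO(3)-invariant
coassociative submanifolds, the quantities `x₄⁴(λ+r²)`, `x₅⁴(λ+r²)` and `a₁x₁`
are conserved. -/
theorem so3_ode_conserved (lam A B : ℝ) (hlam : 0 < lam) (hAB : A < B)
    (x₁ x₄ x₅ a₁ a₂ x₁' x₄' x₅' a₁' a₂' : ℝ → ℝ)
    (hx₁ : ∀ t ∈ Set.Ioo A B, HasDerivAt x₁ (x₁' t) t)
    (hx₄ : ∀ t ∈ Set.Ioo A B, HasDerivAt x₄ (x₄' t) t)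
    (hx₅ : ∀ t ∈ Set.Ioo A B, HasDerivAt x₅ (x₅' t) t)
    (ha₁ : ∀ t ∈ Set.Ioo A B, HasDerivAt a₁ (a₁' t) t)
    (ha₂ : ∀ t ∈ Set.Ioo A B, HasDerivAt a₂ (a₂' t) t)
    (hsphere : ∀ t ∈ Set.Ioo A B, (x₁ t) ^ 2 + (x₄ t) ^ 2 + (x₅ t) ^ 2 = 1)
    (hx₁pos : ∀ t ∈ Set.Ioo A B, 0 < x₁ t)
    (hx₅lt : ∀ t ∈ Set.Ioo A B, x₅ t < 1)
    -- abbreviations: r² = a₁² + a₂², dlog = d/dt log(λ + r²)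
    (r2 : ℝ → ℝ) (hr2 : ∀ t, r2 t = (a₁ t) ^ 2 + (a₂ t) ^ 2)
    (dlog : ℝ → ℝ)
    (hdlog : ∀ t ∈ Set.Ioo A B,
      dlog t = (2 * a₁ t * a₁' t + 2 * a₂ t * a₂' t) / (lam + r2 t))
    -- ODE (i)
    (hode1 : ∀ t ∈ Set.Ioo A B,
      4 * (2 * x₁ t * x₁' t * a₁ t + a₁' t * (x₁ t) ^ 2)
        - (1 - (x₁ t) ^ 2) * a₁ t * dlog t = 0)
    -- ODE (ii)
    (hode2 : ∀ t ∈ Set.Ioo A B,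
      4 * x₁ t * x₁' t - dlog t
        + ((x₁ t) ^ 2 / (1 - x₅ t)) * (4 * x₅' t + dlog t) = 0)
    -- ODE (iii)
    (hode3 : ∀ t ∈ Set.Ioo A B,
      4 * x₄' t + (x₄ t / (1 - x₅ t)) * (4 * x₅' t + dlog t) = 0) :
    ∀ t ∈ Set.Ioo A B, ∀ t' ∈ Set.Ioo A B,
      (x₄ t) ^ 4 * (lam + r2 t) = (x₄ t') ^ 4 * (lam + r2 t') ∧
      (x₅ t) ^ 4 * (lam + r2 t) = (x₅ t') ^ 4 * (lam + r2 t') ∧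
      a₁ t * x₁ t = a₁ t' * x₁ t' := by
  -- positivity of lam + r2
  have hr2pos : ∀ t, 0 < lam + r2 t := by
    intro t
    rw [hr2 t]
    nlinarith [sq_nonneg (a₁ t), sq_nonneg (a₂ t)]
  -- dlog * (lam + r2) = 2a₁a₁' + 2a₂a₂'
  have hD : ∀ t ∈ Set.Ioo A B,
      dlog t * (lam + r2 t) = 2 * a₁ t * a₁' t + 2 * a₂ t * a₂' t := by
    intro t ht
    rw [hdlog t ht, div_mul_cancel₀ _ (hr2pos t).ne']
  -- sphere derivative identity
  have hS : ∀ t ∈ Set.Ioo A B,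
      x₁ t * x₁' t + x₄ t * x₄' t + x₅ t * x₅' t = 0 := by
    intro t ht
    have hg : HasDerivAt (fun s => (x₁ s) ^ 2 + (x₄ s) ^ 2 + (x₅ s) ^ 2)
        (2 * x₁ t ^ 1 * x₁' t + 2 * x₄ t ^ 1 * x₄' t + 2 * x₅ t ^ 1 * x₅' t) t :=
      (((hx₁ t ht).pow 2).add ((hx₄ t ht).pow 2)).add ((hx₅ t ht).pow 2)
    have hEq : (fun s => (x₁ s) ^ 2 + (x₄ s) ^ 2 + (x₅ s) ^ 2)
        =ᶠ[nhds t] (fun _ => (1 : ℝ)) := by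
      filter_upwards [isOpen_Ioo.mem_nhds ht] with s hs using hsphere s hs
    have hg0 : HasDerivAt (fun s => (x₁ s) ^ 2 + (x₄ s) ^ 2 + (x₅ s) ^ 2) 0 t :=
      (hasDerivAt_const t (1 : ℝ)).congr_of_eventuallyEq hEq
    have := hg.unique hg0
    simp only [pow_one] at this
    linarith
  -- the key pointwise identities
  have hxne : ∀ t ∈ Set.Ioo A B, (1 : ℝ) - x₅ t ≠ 0 := by
    intro t ht; have := hx₅lt t ht; intro h; linarith
  have e5 : ∀ t ∈ Set.Ioo A B, 4 * x₅' t + x₅ t * dlog t = 0 := by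
    intro t ht
    have hQ : (4 * x₅' t + dlog t) / (1 - x₅ t) * (1 - x₅ t)
        = 4 * x₅' t + dlog t := div_mul_cancel₀ _ (hxne t ht)
    linear_combination (hode2 t ht) + (x₄ t) * (hode3 t ht) - 4 * (hS t ht)
      - (1 + x₅ t) * hQ
      - ((4 * x₅' t + dlog t) / (1 - x₅ t)) * (hsphere t ht)
  have e4 : ∀ t ∈ Set.Ioo A B, 4 * x₄' t + x₄ t * dlog t = 0 := by
    intro t ht
    have hI : (1 - x₅ t) * (1 - x₅ t)⁻¹ = 1 := mul_inv_cancel₀ (hxne t ht)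
    linear_combination (hode3 t ht) - (x₄ t * (1 - x₅ t)⁻¹) * (e5 t ht)
      - (x₄ t * dlog t) * hI
  have ea : ∀ t ∈ Set.Ioo A B, a₁' t * x₁ t + a₁ t * x₁' t = 0 := by
    intro t ht
    have hmul : x₁ t * (a₁' t * x₁ t + a₁ t * x₁' t) = 0 := by
      linear_combination (1/4 : ℝ) * (hode1 t ht) - (a₁ t) * (hS t ht)
        + (a₁ t * x₄ t / 4) * (e4 t ht) + (a₁ t * x₅ t / 4) * (e5 t ht)
        - (a₁ t * dlog t / 4) * (hsphere t ht)
    rcases mul_eq_zero.mp hmul with h | h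
    · exact absurd h (hx₁pos t ht).ne'
    · exact h
  have hr2' : ∀ t ∈ Set.Ioo A B,
      HasDerivAt (fun s => lam + r2 s)
        (2 * a₁ t * a₁' t + 2 * a₂ t * a₂' t) t := by
    intro t ht
    have h := (hasDerivAt_const t lam).add
      (((ha₁ t ht).pow 2).add ((ha₂ t ht).pow 2))
    have hfun : (fun s => lam + r2 s) = fun s => lam + (a₁ s ^ 2 + a₂ s ^ 2) :=
      funext fun s => by rw [hr2 s]
    rw [hfun]
    refine h.congr_deriv ?_
    norm_num
  have c4 := const_on_Ioo (f := fun s => (x₄ s) ^ 4 * (lam + r2 s))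
    (f' := fun s => 4 * x₄ s ^ 3 * x₄' s * (lam + r2 s)
      + (x₄ s) ^ 4 * (2 * a₁ s * a₁' s + 2 * a₂ s * a₂' s))
    (fun t ht => by
      have h := ((hx₄ t ht).pow 4).mul (hr2' t ht)
      refine h.congr_deriv ?_
      norm_num [Pi.pow_apply])
    (fun t ht => by
      linear_combination (x₄ t ^ 3 * (lam + r2 t)) * (e4 t ht)
        - x₄ t ^ 4 * (hD t ht))
  have c5 := const_on_Ioo (f := fun s => (x₅ s) ^ 4 * (lam + r2 s))
    (f' := fun s => 4 * x₅ s ^ 3 * x₅' s * (lam + r2 s)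
      + (x₅ s) ^ 4 * (2 * a₁ s * a₁' s + 2 * a₂ s * a₂' s))
    (fun t ht => by
      have h := ((hx₅ t ht).pow 4).mul (hr2' t ht)
      refine h.congr_deriv ?_
      norm_num [Pi.pow_apply])
    (fun t ht => by
      linear_combination (x₅ t ^ 3 * (lam + r2 t)) * (e5 t ht)
        - x₅ t ^ 4 * (hD t ht))
  have ca := const_on_Ioo (f := fun s => a₁ s * x₁ s)
    (f' := fun s => a₁' s * x₁ s + a₁ s * x₁' s)
    (fun t ht => (ha₁ t ht).mul (hx₁ t ht))
    (fun t ht => ea t ht)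
  intro t ht t' ht'
  exact ⟨c4 t ht t' ht', c5 t ht t' ht', ca t ht t' ht'⟩
end
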